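/- For every finite simple graph G, |nucleus(G)| + |diadem(G)| ≤ 2·α(G). -/

import Mathlib

variable {V : Type*} [Fintype V] [DecidableEq V]

/-- `S` is an independent set of `G`. -/
def IsIndep (G : SimpleGraph V) (S : Set V) : Prop :=
  ∀ ⦃u⦄, u ∈ S → ∀ ⦃v⦄, v ∈ S → ¬ G.Adj u v

/-- The independence number `α(G)`: the maximum cardinality of an independent set. -/
noncomputable def indepNum (G : SimpleGraph V) : ℕ :=
  sSup {n : ℕ | ∃ S : Set V, IsIndep G S ∧ S.ncard = n}

/-- `S` is a maximum independent set of `G`. -/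
def IsMaxIndep (G : SimpleGraph V) (S : Set V) : Prop :=
  IsIndep G S ∧ ∀ T : Set V, IsIndep G T → T.ncard ≤ S.ncard

/-- The neighborhood `N(X)` of a set of vertices `X`. -/
def nbhdSet (G : SimpleGraph V) (X : Set V) : Set V :=
  {v | ∃ u ∈ X, G.Adj u v}

/-- The difference `d_G(X) = |X| - |N(X)|` of a vertex set `X`. -/
noncomputable def diffSet (G : SimpleGraph V) (X : Set V) : ℤ :=
  (X.ncard : ℤ) - ((nbhdSet G X).ncard : ℤ)

/-- `I` is a critical independent set of `G`. -/
def IsCriticalIndep (G : SimpleGraph V) (I : Set V) : Prop :=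
  IsIndep G I ∧ ∀ J : Set V, IsIndep G J → diffSet G J ≤ diffSet G I

/-- `I` is a maximum-cardinality critical independent set of `G`. -/
def IsMaxCriticalIndep (G : SimpleGraph V) (I : Set V) : Prop :=
  IsCriticalIndep G I ∧ ∀ J : Set V, IsCriticalIndep G J → J.ncard ≤ I.ncard

/-- `core(G)`: the intersection of all maximum independent sets of `G`. -/
def coreSet (G : SimpleGraph V) : Set V := ⋂₀ {S : Set V | IsMaxIndep G S}

/-- `corona(G)`: the union of all maximum independent sets of `G`. -/
def coronaSet (G : SimpleGraph V) : Set V := ⋃₀ {S : Set V | IsMaxIndep G S}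

/-- `ker(G)`: the intersection of all critical independent sets of `G`. -/
def kerSet (G : SimpleGraph V) : Set V := ⋂₀ {S : Set V | IsCriticalIndep G S}

/-- `diadem(G)`: the union of all critical independent sets of `G`. -/
def diademSet (G : SimpleGraph V) : Set V := ⋃₀ {S : Set V | IsCriticalIndep G S}

/-- `nucleus(G)`: the intersection of all maximum-cardinality critical independent
sets of `G`. -/
def nucleusSet (G : SimpleGraph V) : Set V := ⋂₀ {S : Set V | IsMaxCriticalIndep G S}

/-- `C` is the vertex set of some odd cycle of `G`. -/
def IsOddCycleVertexSet (G : SimpleGraph V) (C : Set V) : Prop :=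
  ∃ (v : V) (w : G.Walk v v), w.IsCycle ∧ Odd w.length ∧ {x | x ∈ w.support} = C

/-- The maximum cardinality of a set of pairwise vertex-distinct odd cycles of `G`,
i.e. the number of distinct vertex sets of odd cycles of `G`. -/
noncomputable def numVertexDistinctOddCycles (G : SimpleGraph V) : ℕ :=
  {C : Set V | IsOddCycleVertexSet G C}.ncard

/-- `E` is the edge set of some odd cycle of `G`. -/
def IsOddCycleEdgeSet (G : SimpleGraph V) (E : Set (Sym2 V)) : Prop :=
  ∃ (v : V) (w : G.Walk v v), w.IsCycle ∧ Odd w.length ∧ {e | e ∈ w.edges} = E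

/-- The number of (distinct) odd cycles of `G`, where a cycle is identified with
its edge set. -/
noncomputable def numOddCycles (G : SimpleGraph V) : ℕ :=
  {E : Set (Sym2 V) | IsOddCycleEdgeSet G E}.ncard

/-! Let `I` be a maximum critical independent set and `Q` the diadem. The maximizers of the
supermodular function `d` form a sublattice, so `d(Q) = d(I)`. A vertex of `N(Q) \ N(I)` lies
in `I`, because `Q \ N(Q)` is a critical set inside `I` and every critical set lies in
`I ∪ N(I)`; it is not in the nucleus, because every critical set `J` extends to the maximum
critical set `J ∪ (I \ N(J))`, by Hall's condition for `N(J)`. Hence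
`|N(Q)| - |N(I)| ≤ |I| - |nucleus|`, which together with `|Q| - |N(Q)| = |I| - |N(I)|` gives
`|nucleus| + |Q| ≤ 2|I| ≤ 2α`. -/

section

-- A fresh `V`, so that the lemmas do not inherit the ambient `[Fintype V] [DecidableEq V]`.
variable {V : Type*} {G : SimpleGraph V} {I J X Y : Set V}

lemma nbhdSet_mono (h : X ⊆ Y) : nbhdSet G X ⊆ nbhdSet G Y :=
  fun _ ⟨u, hu, huv⟩ => ⟨u, h hu, huv⟩

lemma nbhdSet_union : nbhdSet G (X ∪ Y) = nbhdSet G X ∪ nbhdSet G Y := by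
  ext v
  simp only [nbhdSet, Set.mem_union, Set.mem_ofPred_eq, or_and_right, exists_or]

lemma nbhdSet_inter_subset : nbhdSet G (X ∩ Y) ⊆ nbhdSet G X ∩ nbhdSet G Y :=
  fun _ ⟨u, hu, huv⟩ => ⟨⟨u, hu.1, huv⟩, u, hu.2, huv⟩

lemma IsIndep.mono (hJ : IsIndep G J) (h : I ⊆ J) : IsIndep G I :=
  fun _ hu _ hv => hJ (h hu) (h hv)

lemma IsIndep.union (hI : IsIndep G I) (hJ : IsIndep G J) (h : Disjoint J (nbhdSet G I)) :
    IsIndep G (I ∪ J) := by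
  rintro u (hu | hu) v (hv | hv) huv
  · exact hI hu hv huv
  · exact Set.disjoint_left.1 h hv ⟨u, hu, huv⟩
  · exact Set.disjoint_left.1 h hu ⟨v, hv, huv.symm⟩
  · exact hJ hu hv huv

lemma isIndep_sdiff_nbhdSet (X : Set V) : IsIndep G (X \ nbhdSet G X) :=
  fun u hu _ hv huv => hv.2 ⟨u, hu.1, huv⟩

lemma nbhdSet_sdiff_nbhdSet_subset (X : Set V) :
    nbhdSet G (X \ nbhdSet G X) ⊆ nbhdSet G X \ X :=
  fun v ⟨u, hu, huv⟩ => ⟨⟨u, hu.1, huv⟩, fun hv => hu.2 ⟨v, hv, huv.symm⟩⟩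

lemma IsCriticalIndep.of_diffSet_le (hI : IsCriticalIndep G I) (hJ : IsIndep G J)
    (h : diffSet G I ≤ diffSet G J) : IsCriticalIndep G J :=
  ⟨hJ, fun K hK => (hI.2 K hK).trans h⟩

lemma subset_diademSet (hJ : IsCriticalIndep G J) : J ⊆ diademSet G :=
  Set.subset_sUnion_of_mem hJ

variable [Finite V]

lemma diffSet_add_diffSet_le :
    diffSet G X + diffSet G Y ≤ diffSet G (X ∪ Y) + diffSet G (X ∩ Y) := by
  have hV := Set.ncard_union_add_ncard_inter X Y
  have hN := Set.ncard_union_add_ncard_inter (nbhdSet G X) (nbhdSet G Y)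
  have hinter := Set.ncard_le_ncard (nbhdSet_inter_subset (G := G) (X := X) (Y := Y))
  simp only [diffSet, nbhdSet_union]
  omega

lemma IsIndep.ncard_le_indepNum (hI : IsIndep G I) : I.ncard ≤ indepNum G :=
  le_csSup ⟨Nat.card V, by rintro _ ⟨S, -, rfl⟩; exact Set.ncard_le_card S⟩ ⟨I, hI, rfl⟩

lemma diffSet_sdiff_nbhdSet (X : Set V) :
    diffSet G (X \ nbhdSet G X) = diffSet G X +
      ((nbhdSet G X \ X).ncard - (nbhdSet G (X \ nbhdSet G X)).ncard) := by
  have hX := Set.ncard_inter_add_ncard_sdiff_eq_ncard X (nbhdSet G X)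
  have hN := Set.ncard_inter_add_ncard_sdiff_eq_ncard (nbhdSet G X) X
  rw [Set.inter_comm] at hN
  simp only [diffSet]
  omega

lemma diffSet_le_diffSet_sdiff_nbhdSet (X : Set V) :
    diffSet G X ≤ diffSet G (X \ nbhdSet G X) := by
  have := Set.ncard_le_ncard (nbhdSet_sdiff_nbhdSet_subset (G := G) X)
  rw [diffSet_sdiff_nbhdSet]
  omega

lemma nbhdSet_subset_union_nbhdSet_sdiff_nbhdSet
    (h : diffSet G (X \ nbhdSet G X) ≤ diffSet G X) :
    nbhdSet G X ⊆ X ∪ nbhdSet G (X \ nbhdSet G X) := by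
  have hsub := nbhdSet_sdiff_nbhdSet_subset (G := G) X
  rw [diffSet_sdiff_nbhdSet] at h
  rw [Set.eq_of_subset_of_ncard_le hsub (by omega), Set.union_sdiff_self]
  exact Set.subset_union_right

namespace IsCriticalIndep

lemma diffSet_le (hI : IsCriticalIndep G I) (X : Set V) : diffSet G X ≤ diffSet G I :=
  (diffSet_le_diffSet_sdiff_nbhdSet X).trans (hI.2 _ (isIndep_sdiff_nbhdSet X))

lemma diffSet_eq (hI : IsCriticalIndep G I) (hJ : IsCriticalIndep G J) :
    diffSet G J = diffSet G I :=
  (hI.diffSet_le J).antisymm (hJ.diffSet_le I)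

lemma supClosed (hI : IsCriticalIndep G I) :
    SupClosed {X : Set V | diffSet G X = diffSet G I} := by
  intro X hX Y hY
  have := diffSet_add_diffSet_le (G := G) (X := X) (Y := Y)
  have := hI.diffSet_le (X ∪ Y)
  have := hI.diffSet_le (X ∩ Y)
  change diffSet G X = diffSet G I at hX
  change diffSet G Y = diffSet G I at hY
  change diffSet G (X ∪ Y) = diffSet G I
  omega

lemma union (hI : IsCriticalIndep G I) (hJ : IsCriticalIndep G J) (h : IsIndep G (I ∪ J)) :
    IsCriticalIndep G (I ∪ J) :=
  hI.of_diffSet_le h (hI.supClosed rfl (hI.diffSet_eq hJ)).ge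

/-- Hall's condition for matching `N(I)` into `I`. -/
lemma ncard_le_ncard_nbhdSet_inter (hI : IsCriticalIndep G I) {T : Set V}
    (hT : T ⊆ nbhdSet G I) : T.ncard ≤ (nbhdSet G T ∩ I).ncard := by
  have hsub : nbhdSet G (I \ nbhdSet G T) ⊆ nbhdSet G I \ T :=
    fun v ⟨u, hu, huv⟩ => ⟨⟨u, hu.1, huv⟩, fun hv => hu.2 ⟨v, hv, huv.symm⟩⟩
  have hcrit := hI.2 (I \ nbhdSet G T) (hI.1.mono Set.sdiff_subset)
  have hI' := Set.ncard_inter_add_ncard_sdiff_eq_ncard I (nbhdSet G T)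
  have hN := Set.ncard_le_ncard hsub
  have hNT := Set.ncard_sdiff hT
  have hTN := Set.ncard_le_ncard hT
  rw [Set.inter_comm]
  simp only [diffSet] at hcrit
  omega

lemma sdiff_nbhdSet (hI : IsCriticalIndep G I) (hJ : IsCriticalIndep G J) :
    IsCriticalIndep G (I \ nbhdSet G J) := by
  have hT := hJ.ncard_le_ncard_nbhdSet_inter (Set.inter_subset_right : I ∩ nbhdSet G J ⊆ _)
  -- a neighbour in `J` of `I ∩ N(J)` sees `I` only inside `N(J)`
  have hR : nbhdSet G (I ∩ nbhdSet G J) ∩ J ⊆ nbhdSet G I \ nbhdSet G (I \ nbhdSet G J) :=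
    fun x ⟨hxT, hxJ⟩ => ⟨nbhdSet_mono Set.inter_subset_left hxT,
      fun ⟨_, hi, hix⟩ => hi.2 ⟨x, hxJ, hix.symm⟩⟩
  refine hI.of_diffSet_le (hI.1.mono Set.sdiff_subset) ?_
  have hI' := Set.ncard_inter_add_ncard_sdiff_eq_ncard I (nbhdSet G J)
  have hR' := Set.ncard_le_ncard hR
  have hN := Set.ncard_sdiff (nbhdSet_mono (G := G) (Set.sdiff_subset : I \ nbhdSet G J ⊆ I))
  have hNN := Set.ncard_le_ncard (nbhdSet_mono (G := G) (Set.sdiff_subset : I \ nbhdSet G J ⊆ I))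
  simp only [diffSet]
  omega

end IsCriticalIndep

lemma exists_isCriticalIndep (G : SimpleGraph V) : ∃ I, IsCriticalIndep G I := by
  obtain ⟨I, hI, hmax⟩ := Set.exists_max_image {S : Set V | IsIndep G S} (diffSet G)
    (Set.toFinite _) ⟨∅, fun _ h => h.elim⟩
  exact ⟨I, hI, hmax⟩

lemma exists_isMaxCriticalIndep (G : SimpleGraph V) : ∃ I, IsMaxCriticalIndep G I := by
  obtain ⟨I, hI, hmax⟩ := Set.exists_max_image {S : Set V | IsCriticalIndep G S} Set.ncard
    (Set.toFinite _) (exists_isCriticalIndep G)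
  exact ⟨I, hI, hmax⟩

namespace IsMaxCriticalIndep

lemma exists_superset (hI : IsMaxCriticalIndep G I) (hJ : IsCriticalIndep G J) :
    ∃ K, IsMaxCriticalIndep G K ∧ J ⊆ K := by
  set S := I \ nbhdSet G J
  have hS : IsCriticalIndep G S := hI.1.sdiff_nbhdSet hJ
  have hK : IsCriticalIndep G (J ∪ S) := hJ.union hS (hJ.1.union hS.1 Set.disjoint_sdiff_left)
  have hT : (I ∩ nbhdSet G J).ncard ≤ (J ∩ nbhdSet G I).ncard :=
    (hJ.ncard_le_ncard_nbhdSet_inter Set.inter_subset_right).trans <|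
      Set.ncard_le_ncard fun x ⟨hx, hxJ⟩ => ⟨hxJ, nbhdSet_mono Set.inter_subset_left hx⟩
  have hdisj : Disjoint (J ∩ nbhdSet G I) S :=
    Set.disjoint_left.2 fun _ ⟨_, _, hu, hux⟩ hxS => hI.1.1 hu hxS.1 hux
  have hcard : I.ncard ≤ (J ∪ S).ncard := by
    have hI' : (I ∩ nbhdSet G J).ncard + S.ncard = I.ncard :=
      Set.ncard_inter_add_ncard_sdiff_eq_ncard _ _
    have hunion := Set.ncard_union_eq hdisj
    have hsub := Set.ncard_le_ncard
      (Set.union_subset_union_left S (Set.inter_subset_left : J ∩ nbhdSet G I ⊆ J))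
    omega
  exact ⟨J ∪ S, ⟨hK, fun L hL => (hI.2 L hL).trans hcard⟩, Set.subset_union_left⟩

lemma subset_of_isIndep_union (hI : IsMaxCriticalIndep G I) (hJ : IsCriticalIndep G J)
    (h : IsIndep G (I ∪ J)) : J ⊆ I :=
  Set.union_eq_left.1
    (Set.eq_of_subset_of_ncard_le Set.subset_union_left (hI.2 _ (hI.1.union hJ h))).symm

lemma sdiff_nbhdSet_subset (hI : IsMaxCriticalIndep G I) (hIX : I ⊆ X)
    (hX : diffSet G I ≤ diffSet G X) : X \ nbhdSet G X ⊆ I := by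
  have hY := hI.1.of_diffSet_le (isIndep_sdiff_nbhdSet X)
    (hX.trans (diffSet_le_diffSet_sdiff_nbhdSet X))
  exact hI.subset_of_isIndep_union hY
    (hI.1.1.union hY.1 (Set.disjoint_sdiff_left.mono_right (nbhdSet_mono hIX)))

lemma subset_union_nbhdSet (hI : IsMaxCriticalIndep G I) (hJ : IsCriticalIndep G J) :
    J ⊆ I ∪ nbhdSet G I := by
  have hsub := hI.sdiff_nbhdSet_subset Set.subset_union_left
    (hI.1.supClosed rfl (hI.1.diffSet_eq hJ)).ge
  intro j hj
  by_cases hjI : j ∈ I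
  · exact Or.inl hjI
  have hjN : j ∈ nbhdSet G (I ∪ J) := by_contra fun h => hjI (hsub ⟨Or.inr hj, h⟩)
  rw [nbhdSet_union] at hjN
  rcases hjN with hjN | ⟨u, hu, huj⟩
  · exact Or.inr hjN
  · exact (hJ.1 hu hj huj).elim

end IsMaxCriticalIndep

lemma diffSet_diademSet (hI : IsCriticalIndep G I) : diffSet G (diademSet G) = diffSet G I :=
  hI.supClosed.sSup_mem_of_nonempty (Set.toFinite _) ⟨I, hI⟩ fun _ hJ => hI.diffSet_eq hJ

lemma disjoint_nucleusSet_nbhdSet_diademSet (G : SimpleGraph V) :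
    Disjoint (nucleusSet G) (nbhdSet G (diademSet G)) := by
  rw [Set.disjoint_left]
  rintro v hv ⟨u, ⟨J, hJ, huJ⟩, huv⟩
  obtain ⟨I, hI⟩ := exists_isMaxCriticalIndep G
  obtain ⟨K, hK, hJK⟩ := hI.exists_superset hJ
  exact hK.1.1 (hJK huJ) (Set.mem_sInter.1 hv K hK) huv

lemma IsMaxCriticalIndep.nbhdSet_diademSet_sdiff_subset (hI : IsMaxCriticalIndep G I) :
    nbhdSet G (diademSet G) \ nbhdSet G I ⊆ I \ nucleusSet G := by
  have hdQ := diffSet_diademSet hI.1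
  have hY := hI.sdiff_nbhdSet_subset (subset_diademSet hI.1) hdQ.ge
  have hNQ : nbhdSet G (diademSet G) ⊆ diademSet G ∪ nbhdSet G I :=
    (nbhdSet_subset_union_nbhdSet_sdiff_nbhdSet (hdQ ▸ hI.1.diffSet_le _)).trans
      (Set.union_subset_union_right _ (nbhdSet_mono hY))
  rintro v ⟨hvQ, hvI⟩
  refine ⟨?_, fun hv => Set.disjoint_left.1 (disjoint_nucleusSet_nbhdSet_diademSet G) hv hvQ⟩
  obtain ⟨J, hJ, hvJ⟩ := (hNQ hvQ).resolve_right hvI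
  exact (hI.subset_union_nbhdSet hJ hvJ).resolve_right hvI

end

/-- For every finite simple graph `G`,
`|nucleus(G)| + |diadem(G)| ≤ 2·α(G)`. -/
theorem nucleus_diadem_le_two_alpha (G : SimpleGraph V) :
    (nucleusSet G).ncard + (diademSet G).ncard ≤ 2 * indepNum G := by
  obtain ⟨I, hI⟩ := exists_isMaxCriticalIndep G
  have hdQ : diffSet G (diademSet G) = diffSet G I := diffSet_diademSet hI.1
  have hNI : nbhdSet G I ⊆ nbhdSet G (diademSet G) := nbhdSet_mono (subset_diademSet hI.1)
  have hX : nucleusSet G ⊆ I := Set.sInter_subset_of_mem hI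
  have hkey := Set.ncard_le_ncard hI.nbhdSet_diademSet_sdiff_subset
  rw [Set.ncard_sdiff hNI, Set.ncard_sdiff hX] at hkey
  have := Set.ncard_le_ncard hNI
  have := Set.ncard_le_ncard hX
  have := hI.1.1.ncard_le_indepNum
  simp only [diffSet] at hdQ
  omega
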